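/- For each i in an index set I, let v_i > 0 and let W_i be a closed subspace of a complex Hilbert space H. Then {(W_i, v_i)}_{i∈I} is a fusion frame for H with fusion frame bounds A, B if and only if for every choice of orthonormal bases {e_ij}_{j∈K_i} for the subspaces W_i, the family {v_i e_ij}_{i∈I, j∈K_i} is a frame for H with frame bounds A, B. -/

import Mathlib

/-! By Parseval's identity in `W i`, `‖P_i x‖² = ∑ⱼ |⟪e_ij, x⟫|²` for any Hilbert basis `e_i` of
`W i`, so the frame sum of `{v_i e_ij}` equals the fusion frame sum of `x` whatever bases are
chosen. Since every closed subspace has a Hilbert basis, the two conditions coincide. -/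

open scoped InnerProductSpace

theorem tsum_sigma_of_nonneg {α : Type*} {β : α → Type*} {f : (Σ a, β a) → ℝ}
    (hf : ∀ p, 0 ≤ f p) (hsum : ∀ a, Summable fun b => f ⟨a, b⟩) :
    ∑' p, f p = ∑' a, ∑' b, f ⟨a, b⟩ := by
  by_cases h : Summable fun a => ∑' b, f ⟨a, b⟩
  · exact ((summable_sigma_of_nonneg hf).2 ⟨hsum, h⟩).tsum_sigma' hsum
  · rw [tsum_eq_zero_of_not_summable h, tsum_eq_zero_of_not_summable]
    exact fun hf' => h ((summable_sigma_of_nonneg hf).1 hf').2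

section

variable {𝕜 E : Type*} [RCLike 𝕜] [NormedAddCommGroup E] [InnerProductSpace 𝕜 E]

theorem HilbertBasis.hasSum_norm_inner_sq {κ : Type*} (b : HilbertBasis κ 𝕜 E) (y : E) :
    HasSum (fun j => ‖⟪b j, y⟫_𝕜‖ ^ 2) (‖y‖ ^ 2) := by
  have h := RCLike.hasSum_re 𝕜 (b.hasSum_inner_mul_inner y y)
  rw [inner_self_eq_norm_sq] at h
  convert h using 2 with j
  rw [← inner_conj_symm y (b j), RCLike.conj_mul, ← RCLike.ofReal_pow, RCLike.ofReal_re]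

theorem HilbertBasis.hasSum_norm_inner_sq_orthogonalProjectionOnto {κ : Type*}
    {U : Submodule 𝕜 E} [CompleteSpace U] (b : HilbertBasis κ 𝕜 U) (x : E) :
    HasSum (fun j => ‖⟪(b j : E), x⟫_𝕜‖ ^ 2) (‖(U.orthogonalProjectionOnto x : E)‖ ^ 2) := by
  simpa only [Submodule.inner_orthogonalProjectionOnto_eq_of_mem_left, Submodule.coe_norm] using
    b.hasSum_norm_inner_sq (U.orthogonalProjectionOnto x)

theorem norm_inner_ofReal_smul_left_sq (r : ℝ) (y x : E) :
    ‖⟪(r : 𝕜) • y, x⟫_𝕜‖ ^ 2 = r ^ 2 * ‖⟪y, x⟫_𝕜‖ ^ 2 := by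
  rw [inner_smul_left, norm_mul, RCLike.norm_conj, RCLike.norm_ofReal, mul_pow, sq_abs]

theorem tsum_norm_inner_smul_hilbertBasis_sq {ι : Type*} {K : ι → Type*} (v : ι → ℝ)
    (W : ι → Submodule 𝕜 E) [∀ i, CompleteSpace (W i)] (e : ∀ i, HilbertBasis (K i) 𝕜 (W i))
    (x : E) :
    ∑' p : Σ i, K i, ‖⟪(v p.1 : 𝕜) • (e p.1 p.2 : E), x⟫_𝕜‖ ^ 2 =
      ∑' i, v i ^ 2 * ‖((W i).orthogonalProjectionOnto x : E)‖ ^ 2 := by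
  have hsum (i : ι) := ((e i).hasSum_norm_inner_sq_orthogonalProjectionOnto x).mul_left (v i ^ 2)
  simp only [norm_inner_ofReal_smul_left_sq]
  rw [tsum_sigma_of_nonneg (fun _ => by positivity)]
  · exact tsum_congr fun i => (hsum i).tsum_eq
  · exact fun i => (hsum i).summable

end

theorem fusion_frame_iff_orthonormal_bases_frame_general {H : Type u} [NormedAddCommGroup H]
    [InnerProductSpace ℂ H]
    {ι : Type*} (v : ι → ℝ)
    (W : ι → Submodule ℂ H) [∀ i, CompleteSpace (W i)]
    (A B : ℝ) :
    (∀ x : H,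
      A * ‖x‖ ^ 2 ≤ ∑' i, v i ^ 2 * ‖((W i).orthogonalProjectionOnto x : H)‖ ^ 2 ∧
      ∑' i, v i ^ 2 * ‖((W i).orthogonalProjectionOnto x : H)‖ ^ 2 ≤ B * ‖x‖ ^ 2) ↔
    (∀ (K : ι → Type u) (e : ∀ i, HilbertBasis (K i) ℂ (W i)) (x : H),
      A * ‖x‖ ^ 2 ≤
        ∑' p : Σ i, K i, ‖(inner ℂ ((v p.1 : ℂ) • ((e p.1 p.2 : W p.1) : H)) x : ℂ)‖ ^ 2 ∧
      ∑' p : Σ i, K i, ‖(inner ℂ ((v p.1 : ℂ) • ((e p.1 p.2 : W p.1) : H)) x : ℂ)‖ ^ 2 ≤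
        B * ‖x‖ ^ 2) := by
  simp only [← RCLike.ofReal_eq_complex_ofReal, tsum_norm_inner_smul_hilbertBasis_sq]
  constructor
  · exact fun h _ _ => h
  · intro h
    choose w b _ using fun i => exists_hilbertBasis ℂ (W i)
    exact h (fun i => w i) b

/-- {(W_i, v_i)} is a fusion frame with bounds A, B if and only if for
every choice of orthonormal (Hilbert) bases {e_ij}_j of the subspaces W_i, the family
{v_i e_ij} is a frame for H with bounds A, B. -/
theorem fusion_frame_iff_orthonormal_bases_frame {H : Type u} [NormedAddCommGroup H]
    [InnerProductSpace ℂ H] [CompleteSpace H]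
    {ι : Type*} (v : ι → ℝ) (hv : ∀ i, 0 < v i)
    (W : ι → Submodule ℂ H) [∀ i, CompleteSpace (W i)]
    (A B : ℝ) (hA : 0 < A) (hAB : A ≤ B) :
    (∀ x : H,
      A * ‖x‖ ^ 2 ≤ ∑' i, v i ^ 2 * ‖((W i).orthogonalProjectionOnto x : H)‖ ^ 2 ∧
      ∑' i, v i ^ 2 * ‖((W i).orthogonalProjectionOnto x : H)‖ ^ 2 ≤ B * ‖x‖ ^ 2) ↔
    (∀ (K : ι → Type u) (e : ∀ i, HilbertBasis (K i) ℂ (W i)) (x : H),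
      A * ‖x‖ ^ 2 ≤
        ∑' p : Σ i, K i, ‖(inner ℂ ((v p.1 : ℂ) • ((e p.1 p.2 : W p.1) : H)) x : ℂ)‖ ^ 2 ∧
      ∑' p : Σ i, K i, ‖(inner ℂ ((v p.1 : ℂ) • ((e p.1 p.2 : W p.1) : H)) x : ℂ)‖ ^ 2 ≤
        B * ‖x‖ ^ 2) :=
  fusion_frame_iff_orthonormal_bases_frame_general v W A B
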